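/- arXiv:2306.16422 — 3 statements merged into one kernel-verified Lean document; each statement's English description precedes it below -/
import Mathlib

section
/- For every x ∈ K_x, the truncated feasible set Γ_ā(x) := {(a, y) ∈ [a_low, ā] × K_y : I_s(x,a,y) ≥ 0 for all s ∈ S} is nonempty, and the truncated value V_ā(x) := inf_{(a,y) ∈ Γ_ā(x)} f(x,a,y) equals the untruncated value V(x) := inf_{(a,y) ∈ Γ(x)} f(x,a,y). -/
/-- Feasible set `Γ(x)` of the convex semi-infinite program. -/
def GammaFull {X Y S : Type*} (Ky : Set Y) (aLow : ℝ)
    (I : S → X → ℝ → Y → ℝ) (x : X) : Set (ℝ × Y) :=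
  {p | aLow ≤ p.1 ∧ p.2 ∈ Ky ∧ ∀ s, 0 ≤ I s x p.1 p.2}

/-- Truncated feasible set `Γ_ā(x)`. -/
def GammaBar {X Y S : Type*} (Ky : Set Y) (aLow abar : ℝ)
    (I : S → X → ℝ → Y → ℝ) (x : X) : Set (ℝ × Y) :=
  {p | p.1 ∈ Set.Icc aLow abar ∧ p.2 ∈ Ky ∧ ∀ s, 0 ≤ I s x p.1 p.2}

/-- with `ā := aUB + 1/Laf + 2`, the truncated feasible set `Γ_ā(x)` is
nonempty and the truncated value equals the untruncated value, for every `x ∈ Kx`. -/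
theorem stmt2 {X Y S : Type*} (Kx : Set X) (Ky : Set Y) (hKy : Ky.Nonempty) (aLow : ℝ)
    (f : X → ℝ → Y → ℝ) (I : S → X → ℝ → Y → ℝ)
    (Laf LaI : ℝ) (hLaf : 0 < Laf) (hLaI : 0 < LaI)
    (hfmono : ∀ x ∈ Kx, ∀ y ∈ Ky, MonotoneOn (fun a => f x a y) (Set.Ici aLow))
    (hImono : ∀ s : S, ∀ x ∈ Kx, ∀ y ∈ Ky, MonotoneOn (fun a => I s x a y) (Set.Ici aLow))
    (hIslope : ∀ s : S, ∀ x ∈ Kx, ∀ y ∈ Ky, ∀ a1 a2 : ℝ, aLow ≤ a2 → a2 ≤ a1 →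
      LaI * (a1 - a2) ≤ I s x a1 y - I s x a2 y)
    (M : ℝ)
    (hM : IsGLB {z : ℝ | ∃ s : S, ∃ x ∈ Kx, ∃ y ∈ Ky, z = I s x aLow y} M) :
    ∀ x ∈ Kx,
      (GammaBar Ky aLow (aLow + |M| / LaI + 1 / Laf + 2) I x).Nonempty ∧
      sInf ((fun p : ℝ × Y => f x p.1 p.2) ''
          GammaBar Ky aLow (aLow + |M| / LaI + 1 / Laf + 2) I x)
        = sInf ((fun p : ℝ × Y => f x p.1 p.2) '' GammaFull Ky aLow I x) := by
  intro x hx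
  set athr : ℝ := aLow + |M| / LaI with hathr
  set abar : ℝ := aLow + |M| / LaI + 1 / Laf + 2 with habar
  have hMnn : 0 ≤ |M| / LaI := div_nonneg (abs_nonneg M) hLaI.le
  have hathr_le : athr ≤ abar := by
    have : 0 < 1 / Laf + 2 := by positivity
    simp only [hathr, habar]; linarith
  have haLow_athr : aLow ≤ athr := by simp [hathr]; linarith
  -- key: feasibility at athr
  have hfeas : ∀ y ∈ Ky, ∀ s : S, 0 ≤ I s x athr y := by
    intro y hy s
    have hMle : M ≤ I s x aLow y := hM.1 ⟨s, x, hx, y, hy, rfl⟩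
    have hslope := hIslope s x hx y hy athr aLow le_rfl haLow_athr
    have hcalc : LaI * (athr - aLow) = |M| := by
      simp only [hathr]
      field_simp
      ring
    have : |M| ≤ I s x athr y - I s x aLow y := by rw [← hcalc]; linarith [hslope]
    have hM' : -|M| ≤ M := neg_abs_le M
    linarith
  obtain ⟨y0, hy0⟩ := hKy
  have hmem0 : ((athr, y0) : ℝ × Y) ∈ GammaBar Ky aLow abar I x :=
    ⟨⟨haLow_athr, hathr_le⟩, hy0, hfeas y0 hy0⟩
  refine ⟨⟨(athr, y0), hmem0⟩, ?_⟩
  apply csInf_eq_csInf_of_forall_exists_le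
  · rintro z ⟨p, hp, rfl⟩
    exact ⟨_, ⟨p, ⟨hp.1.1, hp.2.1, hp.2.2⟩, rfl⟩, le_rfl⟩
  · rintro z ⟨⟨a, y⟩, ⟨ha, hy, hI⟩, rfl⟩
    by_cases hcase : a ≤ abar
    · exact ⟨_, ⟨(a, y), ⟨⟨ha, hcase⟩, hy, hI⟩, rfl⟩, le_rfl⟩
    · refine ⟨_, ⟨(athr, y), ⟨⟨haLow_athr, hathr_le⟩, hy, hfeas y hy⟩, rfl⟩, ?_⟩
      exact hfmono x hx y hy haLow_athr ha (le_trans hathr_le (le_of_not_ge hcase))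
end

section
/- The correspondence K_x ∋ x ↠ Γ_ā(x) is lower hemicontinuous: for every x_n → x in K_x and every (a, y) ∈ Γ_ā(x), there exist (a_n, y_n) ∈ Γ_ā(x_n) for all n large enough with (a_n, y_n) → (a, y). Moreover, one can take a_n := a + (L_I / L_aI)·‖x_n − x‖ and y_n := y whenever a ≤ a_UB. -/
open Filter Topology

/-- the correspondence `x ↠ Γ_ā(x)` (with `ā := aUB + 1/Laf + 2`,
`aUB := aLow + |M|/LaI`) is lower hemicontinuous: for `x_n → x` in `Kx` and
`(a,y) ∈ Γ_ā(x)` there are `(a_n, y_n) ∈ Γ_ā(x_n)` for all large `n` converging to `(a,y)`;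
moreover, if `a ≤ aUB` one can take `a_n := a + (LI/LaI)·‖x_n − x‖` and `y_n := y`. -/
theorem stmt5 {nx ny : ℕ} {S : Type*}
    (Kx : Set (Fin nx → ℝ)) (Ky : Set (Fin ny → ℝ))
    (aLow Laf LaI : ℝ) (hLaf : 0 < Laf) (hLaI : 0 < LaI)
    (I : S → (Fin nx → ℝ) → ℝ → (Fin ny → ℝ) → ℝ) (LI : NNReal)
    (M : ℝ)
    (hM : IsGLB {z : ℝ | ∃ s : S, ∃ x ∈ Kx, ∃ y ∈ Ky, z = I s x aLow y} M)
    (abar : ℝ) (habar : abar = aLow + |M| / LaI + 1 / Laf + 2)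
    (hILip : ∀ s : S, LipschitzOnWith LI
      (fun q : (Fin nx → ℝ) × ℝ × (Fin ny → ℝ) => I s q.1 q.2.1 q.2.2)
      (Kx ×ˢ Set.Icc aLow abar ×ˢ Ky))
    (hIslope : ∀ s : S, ∀ x ∈ Kx, ∀ y ∈ Ky, ∀ a1 a2 : ℝ, aLow ≤ a2 → a2 ≤ a1 →
      LaI * (a1 - a2) ≤ I s x a1 y - I s x a2 y) :
    ∀ x ∈ Kx, ∀ xseq : ℕ → (Fin nx → ℝ), (∀ n, xseq n ∈ Kx) →
      Tendsto xseq atTop (𝓝 x) →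
      ∀ a : ℝ, ∀ y : Fin ny → ℝ, (a, y) ∈ GammaBar Ky aLow abar I x →
        ((∃ p : ℕ → ℝ × (Fin ny → ℝ), ∃ N : ℕ,
            (∀ n ≥ N, p n ∈ GammaBar Ky aLow abar I (xseq n)) ∧
            Tendsto p atTop (𝓝 (a, y))) ∧
        (a ≤ aLow + |M| / LaI → ∃ N : ℕ, ∀ n ≥ N,
            (a + ((LI : ℝ) / LaI) * ‖xseq n - x‖, y) ∈ GammaBar Ky aLow abar I (xseq n))) := by
  intro x hx xs hxs hxt a y hay
  obtain ⟨⟨haL, haU⟩, hy, hI⟩ := hay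
  dsimp only at haL haU hy hI
  have hnorm : Tendsto (fun n => ‖xs n - x‖) atTop (𝓝 0) := by
    rw [← tendsto_iff_norm_sub_tendsto_zero] at *
    exact hxt
  have key : ∀ s n, |I s (xs n) a y - I s x a y| ≤ (LI : ℝ) * ‖xs n - x‖ := by
    intro s n
    have hmem1 : ((xs n, (a, y)) : (Fin nx → ℝ) × ℝ × (Fin ny → ℝ)) ∈
        Kx ×ˢ Set.Icc aLow abar ×ˢ Ky := ⟨hxs n, ⟨haL, haU⟩, hy⟩
    have hmem2 : ((x, (a, y)) : (Fin nx → ℝ) × ℝ × (Fin ny → ℝ)) ∈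
        Kx ×ˢ Set.Icc aLow abar ×ˢ Ky := ⟨hx, ⟨haL, haU⟩, hy⟩
    have h := (hILip s).dist_le_mul _ hmem1 _ hmem2
    have hd : dist ((xs n, (a, y)) : (Fin nx → ℝ) × ℝ × (Fin ny → ℝ)) (x, (a, y))
        = ‖xs n - x‖ := by
      rw [Prod.dist_eq, Prod.dist_eq, dist_self, dist_self, max_self,
        max_eq_left dist_nonneg, dist_eq_norm]
    rw [hd] at h
    simpa [Real.dist_eq] using h
  have part2 : a ≤ aLow + |M| / LaI → ∃ N : ℕ, ∀ n ≥ N,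
      (a + ((LI : ℝ) / LaI) * ‖xs n - x‖, y) ∈ GammaBar Ky aLow abar I (xs n) := by
    intro haUB
    have ht : Tendsto (fun n => ((LI : ℝ) / LaI) * ‖xs n - x‖) atTop (𝓝 0) := by
      simpa using hnorm.const_mul ((LI : ℝ) / LaI)
    have hev : ∀ᶠ n in atTop, ((LI : ℝ) / LaI) * ‖xs n - x‖ < 1 :=
      ht.eventually_lt_const (by norm_num)
    obtain ⟨N, hN⟩ := eventually_atTop.1 hev
    refine ⟨N, fun n hn => ?_⟩
    set t := ((LI : ℝ) / LaI) * ‖xs n - x‖ with htdef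
    have ht0 : 0 ≤ t := mul_nonneg (div_nonneg LI.coe_nonneg hLaI.le) (norm_nonneg _)
    have hLaf' : 0 < 1 / Laf := one_div_pos.2 hLaf
    refine ⟨⟨show aLow ≤ a + t by linarith, show a + t ≤ abar by linarith [hN n hn]⟩,
      hy, fun s => show (0:ℝ) ≤ I s (xs n) (a + t) y from ?_⟩
    have hslope := hIslope s (xs n) (hxs n) y hy (a + t) a haL (by linarith)
    have hk := abs_le.1 (key s n)
    have heq : LaI * (((LI : ℝ) / LaI) * ‖xs n - x‖) = (LI : ℝ) * ‖xs n - x‖ := by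
      field_simp
    have h2 := hI s
    simp only [add_sub_cancel_left] at hslope
    rw [htdef, heq] at hslope
    linarith [hk.1]
  refine ⟨?_, part2⟩
  by_cases h : a ≤ aLow + |M| / LaI
  · obtain ⟨N, hN⟩ := part2 h
    refine ⟨fun n => (a + ((LI : ℝ) / LaI) * ‖xs n - x‖, y), N, hN, ?_⟩
    have h1 : Tendsto (fun n => a + ((LI : ℝ) / LaI) * ‖xs n - x‖) atTop (𝓝 a) := by
      have := (hnorm.const_mul ((LI : ℝ) / LaI)).const_add a
      simpa using this
    exact h1.prodMk_nhds tendsto_const_nhds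
  · push_neg at h
    have hε : 0 < LaI * (a - (aLow + |M| / LaI)) := mul_pos hLaI (by linarith)
    have ht : Tendsto (fun n => (LI : ℝ) * ‖xs n - x‖) atTop (𝓝 0) := by
      simpa using hnorm.const_mul (LI : ℝ)
    have hev : ∀ᶠ n in atTop, (LI : ℝ) * ‖xs n - x‖ < LaI * (a - (aLow + |M| / LaI)) :=
      ht.eventually_lt_const hε
    obtain ⟨N, hN⟩ := eventually_atTop.1 hev
    refine ⟨fun _ => (a, y), N, fun n hn => ⟨⟨haL, haU⟩, hy,
      fun s => show (0:ℝ) ≤ I s (xs n) a y from ?_⟩, tendsto_const_nhds⟩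
    have hMle : M ≤ I s x aLow y := hM.1 ⟨s, x, hx, y, hy, rfl⟩
    have hslope := hIslope s x hx y hy a aLow le_rfl haL
    have hk := abs_le.1 (key s n)
    have hnM : -|M| ≤ M := neg_abs_le M
    have heq : LaI * (|M| / LaI) = |M| := by field_simp
    have := hN n hn
    nlinarith [hk.1]
end

section
/- For every ε ∈ (0,1) there exists a continuous selector x ↦ (a*(x), y*(x)) ∈ Γ_ā(x) on K_x such that f(x, a*(x), y*(x)) − V_ā(x) ≤ ε and a*(x) ≤ a_UB + 1/L_af for all x ∈ K_x. -/
/-- Truncated value `V_ā(x)`. -/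
noncomputable def VBar {X Y S : Type*} (Ky : Set Y) (aLow abar : ℝ)
    (f : X → ℝ → Y → ℝ) (I : S → X → ℝ → Y → ℝ) (x : X) : ℝ :=
  sInf ((fun p : ℝ × Y => f x p.1 p.2) '' GammaBar Ky aLow abar I x)

/-! The ε-argmin sets `{p ∈ Γ_ā(x) | f(x,p) ≤ V_ā(x) + ε}` are convex, so a partition of unity
glues local choices into a continuous selector once every `x₀` has a single point lying in these
sets for all `x` near `x₀`. Such a point comes from a near-minimiser at `x₀` by raising `a` a
little: the slope `L_aI` of `I` in `a` makes up for the Lipschitz change of `I` in `x`, and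
uniform continuity of `f` on the compact set `K_x × [a_low, ā] × K_y` bounds the cost. The same
shift makes `V_ā` lower semicontinuous, which keeps the shifted point ε-optimal. Every `y` is
feasible at `a_UB`, so by the slope `L_af` an ε-optimal point has `a ≤ a_UB + ε / L_af`. -/

open Set Filter Topology

theorem exists_continuousOn_forall_mem_convex_of_eventually_mem {X E : Type*} [MetricSpace X]
    [AddCommGroup E] [Module ℝ E] [TopologicalSpace E] [ContinuousAdd E] [ContinuousSMul ℝ E]
    {K : Set X} {t : X → Set E} (ht : ∀ x ∈ K, Convex ℝ (t x))
    (H : ∀ x ∈ K, ∃ c, ∀ᶠ y in 𝓝[K] x, c ∈ t y) :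
    ∃ g : X → E, ContinuousOn g K ∧ ∀ x ∈ K, g x ∈ t x := by
  classical
  obtain ⟨g, hg⟩ := exists_continuous_forall_mem_convex_of_local_const (t := fun z : K => t z)
    (fun z => ht z z.2) fun z => (H z z.2).imp fun _ hc => (eventually_nhds_subtype_iff K z _).2 hc
  refine ⟨fun x => if hx : x ∈ K then g ⟨x, hx⟩ else 0, ?_,
    fun x hx => by simpa [hx] using hg ⟨x, hx⟩⟩
  rw [continuousOn_iff_continuous_domRestrict]
  convert g.continuous using 1
  funext z
  exact dif_pos z.2

section

variable {X Y S : Type*} {Ky : Set Y} {aLow abar ε : ℝ} {f : X → ℝ → Y → ℝ}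
  {I : S → X → ℝ → Y → ℝ} {x : X}

def epsArgmin (Ky : Set Y) (aLow abar ε : ℝ) (f : X → ℝ → Y → ℝ) (I : S → X → ℝ → Y → ℝ)
    (x : X) : Set (ℝ × Y) :=
  {p ∈ GammaBar Ky aLow abar I x | f x p.1 p.2 ≤ VBar Ky aLow abar f I x + ε}

theorem gammaBar_subset_Icc_prod : GammaBar Ky aLow abar I x ⊆ Icc aLow abar ×ˢ Ky :=
  fun _ hp => ⟨hp.1, hp.2.1⟩

theorem mk_mem_gammaBar_of_lowerBound {Kx : Set X} {M LaI : ℝ} {y : Y}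
    (hM : M ∈ lowerBounds {z : ℝ | ∃ s : S, ∃ x ∈ Kx, ∃ y ∈ Ky, z = I s x aLow y})
    (hIslope : ∀ s, ∀ x ∈ Kx, ∀ y ∈ Ky, ∀ a1 a2 : ℝ, aLow ≤ a2 → a2 ≤ a1 →
      LaI * (a1 - a2) ≤ I s x a1 y - I s x a2 y)
    (hLaI : 0 < LaI) (habar : aLow + |M| / LaI ≤ abar) (hx : x ∈ Kx) (hy : y ∈ Ky) :
    (aLow + |M| / LaI, y) ∈ GammaBar Ky aLow abar I x := by
  have hUB : aLow ≤ aLow + |M| / LaI := le_add_of_nonneg_right (by positivity)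
  refine ⟨⟨hUB, habar⟩, hy, fun s => ?_⟩
  have hrise := hIslope s x hx y hy _ aLow le_rfl hUB
  rw [add_sub_cancel_left, mul_div_cancel₀ _ hLaI.ne'] at hrise
  linarith [hM ⟨s, x, hx, y, hy, rfl⟩, neg_abs_le M]

theorem bddBelow_image_gammaBar [TopologicalSpace Y] (hKy : IsCompact Ky)
    (hf : ContinuousOn (fun p : ℝ × Y => f x p.1 p.2) (Icc aLow abar ×ˢ Ky)) :
    BddBelow ((fun p : ℝ × Y => f x p.1 p.2) '' GammaBar Ky aLow abar I x) :=
  ((isCompact_Icc.prod hKy).bddBelow_image hf).mono (image_mono gammaBar_subset_Icc_prod)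

theorem convex_gammaBar [AddCommGroup Y] [Module ℝ Y] (hKy : Convex ℝ Ky)
    (hI : ∀ s, ConcaveOn ℝ (Ici aLow ×ˢ Ky) fun p : ℝ × Y => I s x p.1 p.2) :
    Convex ℝ (GammaBar Ky aLow abar I x) := by
  intro p hp q hq a b ha hb hab
  have hdom := (convex_Icc aLow abar).prod hKy ⟨hp.1, hp.2.1⟩ ⟨hq.1, hq.2.1⟩ ha hb hab
  refine ⟨hdom.1, hdom.2, fun s => ?_⟩
  have hconc := (hI s).2 ⟨hp.1.1, hp.2.1⟩ ⟨hq.1.1, hq.2.1⟩ ha hb hab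
  simp only [smul_eq_mul] at hconc
  linarith [mul_nonneg ha (hp.2.2 s), mul_nonneg hb (hq.2.2 s)]

theorem convex_epsArgmin [AddCommGroup Y] [Module ℝ Y] (hKy : Convex ℝ Ky)
    (hI : ∀ s, ConcaveOn ℝ (Ici aLow ×ˢ Ky) fun p : ℝ × Y => I s x p.1 p.2)
    (hf : ConvexOn ℝ (Ici aLow ×ˢ Ky) fun p : ℝ × Y => f x p.1 p.2) :
    Convex ℝ (epsArgmin Ky aLow abar ε f I x) :=
  (hf.subset (gammaBar_subset_Icc_prod.trans (prod_mono_left Icc_subset_Ici_self))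
    (convex_gammaBar hKy hI)).convex_le _

theorem vBar_le_of_mem
    (hbdd : BddBelow ((fun p : ℝ × Y => f x p.1 p.2) '' GammaBar Ky aLow abar I x))
    {p : ℝ × Y} (hp : p ∈ GammaBar Ky aLow abar I x) : VBar Ky aLow abar f I x ≤ f x p.1 p.2 :=
  csInf_le hbdd ⟨p, hp, rfl⟩

theorem exists_lt_vBar_add (hne : (GammaBar Ky aLow abar I x).Nonempty) {η : ℝ} (hη : 0 < η) :
    ∃ p ∈ GammaBar Ky aLow abar I x, f x p.1 p.2 < VBar Ky aLow abar f I x + η := by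
  obtain ⟨_, ⟨p, hp, rfl⟩, hlt⟩ := Real.lt_sInf_add_pos (hne.image _) hη
  exact ⟨p, hp, hlt⟩

theorem fst_le_of_le_vBar_add {aUB Laf η : ℝ} {p : ℝ × Y}
    (hbdd : BddBelow ((fun p : ℝ × Y => f x p.1 p.2) '' GammaBar Ky aLow abar I x))
    (hbase : (aUB, p.2) ∈ GammaBar Ky aLow abar I x) (hLaf : 0 < Laf)
    (hslope : aUB ≤ p.1 → Laf * (p.1 - aUB) ≤ f x p.1 p.2 - f x aUB p.2) (hη : 0 ≤ η)
    (hp : f x p.1 p.2 ≤ VBar Ky aLow abar f I x + η) : p.1 ≤ aUB + η / Laf := by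
  rcases le_total p.1 aUB with h | h
  · linarith [div_nonneg hη hLaf.le]
  · rw [← sub_le_iff_le_add', le_div_iff₀ hLaf]
    linarith [hslope h, vBar_le_of_mem hbdd hbase]

theorem exists_lt_vBar_add_and_fst_le {aUB Laf η : ℝ} (hKy : Ky.Nonempty)
    (hbdd : BddBelow ((fun p : ℝ × Y => f x p.1 p.2) '' GammaBar Ky aLow abar I x))
    (hbase : ∀ y ∈ Ky, (aUB, y) ∈ GammaBar Ky aLow abar I x) (hLaf : 0 < Laf)
    (hslope : ∀ y ∈ Ky, ∀ a, aUB ≤ a → Laf * (a - aUB) ≤ f x a y - f x aUB y) (hη : 0 < η) :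
    ∃ p ∈ GammaBar Ky aLow abar I x,
      f x p.1 p.2 < VBar Ky aLow abar f I x + η ∧ p.1 ≤ aUB + 1 / Laf := by
  obtain ⟨y, hy⟩ := hKy
  obtain ⟨p, hp, hlt⟩ := exists_lt_vBar_add ⟨_, hbase y hy⟩ (lt_min hη one_pos)
  refine ⟨p, hp, hlt.trans_le (by gcongr; exact min_le_left _ _), ?_⟩
  calc p.1 ≤ aUB + min η 1 / Laf :=
        fst_le_of_le_vBar_add hbdd (hbase p.2 hp.2.1) hLaf (hslope p.2 hp.2.1 p.1) (by positivity)
          hlt.le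
    _ ≤ aUB + 1 / Laf := by gcongr; exact min_le_right _ _

end

section Metric

variable {X Y S : Type*} [PseudoMetricSpace X] {Kx : Set X} {Ky : Set Y}
  {aLow abar B ε : ℝ} {f : X → ℝ → Y → ℝ} {I : S → X → ℝ → Y → ℝ} {LI : NNReal} {LaI : ℝ}

theorem fst_add_mem_gammaBar [PseudoMetricSpace Y]
    (hILip : ∀ s, LipschitzOnWith LI (fun q : X × ℝ × Y => I s q.1 q.2.1 q.2.2)
      (Kx ×ˢ Ici aLow ×ˢ Ky))
    (hIslope : ∀ s, ∀ x ∈ Kx, ∀ y ∈ Ky, ∀ a1 a2 : ℝ, aLow ≤ a2 → a2 ≤ a1 →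
      LaI * (a1 - a2) ≤ I s x a1 y - I s x a2 y)
    {x x' : X} (hx : x ∈ Kx) (hx' : x' ∈ Kx) {p : ℝ × Y} (hp : p ∈ GammaBar Ky aLow abar I x)
    {t : ℝ} (ht : 0 ≤ t) (hpt : p.1 + t ≤ abar) (hdist : LI * dist x x' ≤ LaI * t) :
    (p.1 + t, p.2) ∈ GammaBar Ky aLow abar I x' := by
  refine ⟨⟨by linarith [hp.1.1], hpt⟩, hp.2.1, fun s => ?_⟩
  have hmove := (hILip s).dist_le_mul (x, p.1, p.2) ⟨hx, hp.1.1, hp.2.1⟩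
    (x', p.1, p.2) ⟨hx', hp.1.1, hp.2.1⟩
  dsimp only at hmove
  rw [dist_prod_same_right, Real.dist_eq] at hmove
  have hrise := hIslope s x' hx' p.2 hp.2.1 (p.1 + t) p.1 hp.1.1 (by linarith)
  rw [add_sub_cancel_left] at hrise
  show 0 ≤ I s x' (p.1 + t) p.2
  linarith [le_abs_self (I s x p.1 p.2 - I s x' p.1 p.2), hp.2.2 s]

theorem exists_uniform_shift_mem_gammaBar [PseudoMetricSpace Y] (hKx : IsCompact Kx)
    (hKy : IsCompact Ky) (hB : B + 1 ≤ abar)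
    (hf : ContinuousOn (fun q : X × ℝ × Y => f q.1 q.2.1 q.2.2) (Kx ×ˢ Icc aLow abar ×ˢ Ky))
    (hILip : ∀ s, LipschitzOnWith LI (fun q : X × ℝ × Y => I s q.1 q.2.1 q.2.2)
      (Kx ×ˢ Ici aLow ×ˢ Ky))
    (hIslope : ∀ s, ∀ x ∈ Kx, ∀ y ∈ Ky, ∀ a1 a2 : ℝ, aLow ≤ a2 → a2 ≤ a1 →
      LaI * (a1 - a2) ≤ I s x a1 y - I s x a2 y)
    (hLaI : 0 < LaI) {θ : ℝ} (hθ : 0 < θ) :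
    ∃ t δ : ℝ, 0 < δ ∧ ∀ x ∈ Kx, ∀ x' ∈ Kx, dist x x' ≤ δ →
      ∀ p ∈ GammaBar Ky aLow abar I x, p.1 ≤ B →
        (p.1 + t, p.2) ∈ GammaBar Ky aLow abar I x' ∧ f x' (p.1 + t) p.2 ≤ f x p.1 p.2 + θ := by
  obtain ⟨δ₁, hδ₁, hunif⟩ := Metric.uniformContinuousOn_iff_le.mp
    ((hKx.prod (isCompact_Icc.prod hKy)).uniformContinuousOn_of_continuous hf) θ hθ
  set t := min δ₁ 1
  have ht : 0 < t := lt_min hδ₁ one_pos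
  refine ⟨t, min δ₁ (LaI * t / (LI + 1)), by positivity,
    fun x hx x' hx' hxx' p hp hpB => ⟨?_, ?_⟩⟩
  · refine fst_add_mem_gammaBar hILip hIslope hx hx' hp ht.le (by linarith [min_le_right δ₁ 1]) ?_
    calc (LI : ℝ) * dist x x' ≤ (LI + 1) * (LaI * t / (LI + 1)) := by
          gcongr
          · linarith
          · exact hxx'.trans (min_le_right _ _)
      _ = LaI * t := by field_simp
  · have hpt : p.1 + t ∈ Icc aLow abar :=
      ⟨by linarith [hp.1.1], by linarith [min_le_right δ₁ 1]⟩
    have hclose := hunif (x', p.1 + t, p.2) ⟨hx', hpt, hp.2.1⟩ (x, p.1, p.2) ⟨hx, hp.1, hp.2.1⟩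
      (by
        rw [Prod.dist_eq, dist_prod_same_right, Real.dist_eq, add_sub_cancel_left,
          abs_of_pos ht, dist_comm]
        exact max_le (hxx'.trans (min_le_left _ _)) (min_le_left _ _))
    rw [Real.dist_eq] at hclose
    linarith [le_abs_self (f x' (p.1 + t) p.2 - f x p.1 p.2)]

theorem exists_pos_vBar_le_vBar_add
    (hbdd : ∀ x ∈ Kx, BddBelow ((fun p : ℝ × Y => f x p.1 p.2) '' GammaBar Ky aLow abar I x))
    (hnear : ∀ x ∈ Kx, ∀ η > 0, ∃ p ∈ GammaBar Ky aLow abar I x,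
      f x p.1 p.2 < VBar Ky aLow abar f I x + η ∧ p.1 ≤ B)
    (hshift : ∀ θ > 0, ∃ t δ : ℝ, 0 < δ ∧ ∀ x ∈ Kx, ∀ x' ∈ Kx, dist x x' ≤ δ →
      ∀ p ∈ GammaBar Ky aLow abar I x, p.1 ≤ B →
        (p.1 + t, p.2) ∈ GammaBar Ky aLow abar I x' ∧ f x' (p.1 + t) p.2 ≤ f x p.1 p.2 + θ)
    {θ : ℝ} (hθ : 0 < θ) :
    ∃ δ > 0, ∀ x ∈ Kx, ∀ x' ∈ Kx, dist x x' ≤ δ →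
      VBar Ky aLow abar f I x' ≤ VBar Ky aLow abar f I x + θ := by
  obtain ⟨t, δ, hδ, hmove⟩ := hshift (θ / 2) (by positivity)
  refine ⟨δ, hδ, fun x hx x' hx' hxx' => ?_⟩
  obtain ⟨p, hp, hpV, hpB⟩ := hnear x hx (θ / 2) (by positivity)
  obtain ⟨hmem, hle⟩ := hmove x hx x' hx' hxx' p hp hpB
  linarith [vBar_le_of_mem (hbdd x' hx') hmem]

theorem exists_eventually_mem_epsArgmin
    (hbdd : ∀ x ∈ Kx, BddBelow ((fun p : ℝ × Y => f x p.1 p.2) '' GammaBar Ky aLow abar I x))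
    (hnear : ∀ x ∈ Kx, ∀ η > 0, ∃ p ∈ GammaBar Ky aLow abar I x,
      f x p.1 p.2 < VBar Ky aLow abar f I x + η ∧ p.1 ≤ B)
    (hshift : ∀ θ > 0, ∃ t δ : ℝ, 0 < δ ∧ ∀ x ∈ Kx, ∀ x' ∈ Kx, dist x x' ≤ δ →
      ∀ p ∈ GammaBar Ky aLow abar I x, p.1 ≤ B →
        (p.1 + t, p.2) ∈ GammaBar Ky aLow abar I x' ∧ f x' (p.1 + t) p.2 ≤ f x p.1 p.2 + θ)
    (hε : 0 < ε) {x₀ : X} (hx₀ : x₀ ∈ Kx) :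
    ∃ c, ∀ᶠ x in 𝓝[Kx] x₀, c ∈ epsArgmin Ky aLow abar ε f I x := by
  obtain ⟨δV, hδV, hV⟩ :=
    exists_pos_vBar_le_vBar_add hbdd hnear hshift (θ := ε / 3) (by positivity)
  obtain ⟨t, δ, hδ, hmove⟩ := hshift (ε / 3) (by positivity)
  obtain ⟨p, hp, hpV, hpB⟩ := hnear x₀ hx₀ (ε / 3) (by positivity)
  refine ⟨(p.1 + t, p.2), ?_⟩
  filter_upwards [self_mem_nhdsWithin,
    mem_nhdsWithin_of_mem_nhds (Metric.closedBall_mem_nhds x₀ (lt_min hδV hδ))] with x hx hxx₀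
  rw [Metric.mem_closedBall] at hxx₀
  obtain ⟨hmem, hle⟩ :=
    hmove x₀ hx₀ x hx (dist_comm x₀ x ▸ hxx₀.trans (min_le_right _ _)) p hp hpB
  exact ⟨hmem, by linarith [hV x hx x₀ hx₀ (hxx₀.trans (min_le_left _ _))]⟩

end Metric

theorem stmt10_general {nx ny : ℕ} {S : Type*}
    (Kx : Set (Fin nx → ℝ)) (hKx : IsCompact Kx)
    (Ky : Set (Fin ny → ℝ)) (hKycomp : IsCompact Ky) (hKyconv : Convex ℝ Ky)
    (hKyne : Ky.Nonempty)
    (aLow : ℝ) (f : (Fin nx → ℝ) → ℝ → (Fin ny → ℝ) → ℝ)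
    (I : S → (Fin nx → ℝ) → ℝ → (Fin ny → ℝ) → ℝ)
    (hfcont : ContinuousOn
      (fun q : (Fin nx → ℝ) × ℝ × (Fin ny → ℝ) => f q.1 q.2.1 q.2.2)
      (Kx ×ˢ Set.Ici aLow ×ˢ Ky))
    (hfconv : ∀ x ∈ Kx,
      ConvexOn ℝ (Set.Ici aLow ×ˢ Ky) (fun p : ℝ × (Fin ny → ℝ) => f x p.1 p.2))
    (Laf : ℝ) (hLaf : 0 < Laf)
    (hfslope : ∀ x ∈ Kx, ∀ y ∈ Ky, ∀ a1 a2 : ℝ, aLow ≤ a2 → a2 ≤ a1 →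
      Laf * (a1 - a2) ≤ f x a1 y - f x a2 y)
    (LI : NNReal)
    (hILip : ∀ s : S, LipschitzOnWith LI
      (fun q : (Fin nx → ℝ) × ℝ × (Fin ny → ℝ) => I s q.1 q.2.1 q.2.2)
      (Kx ×ˢ Set.Ici aLow ×ˢ Ky))
    (hIconc : ∀ s : S, ∀ x ∈ Kx,
      ConcaveOn ℝ (Set.Ici aLow ×ˢ Ky) (fun p : ℝ × (Fin ny → ℝ) => I s x p.1 p.2))
    (LaI : ℝ) (hLaI : 0 < LaI)
    (hIslope : ∀ s : S, ∀ x ∈ Kx, ∀ y ∈ Ky, ∀ a1 a2 : ℝ, aLow ≤ a2 → a2 ≤ a1 →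
      LaI * (a1 - a2) ≤ I s x a1 y - I s x a2 y)
    (M : ℝ)
    (hM : IsGLB {z : ℝ | ∃ s : S, ∃ x ∈ Kx, ∃ y ∈ Ky, z = I s x aLow y} M) :
    ∀ ε : ℝ, 0 < ε → ε < 1 →
      ∃ sel : (Fin nx → ℝ) → ℝ × (Fin ny → ℝ),
        ContinuousOn sel Kx ∧
        ∀ x ∈ Kx,
          sel x ∈ GammaBar Ky aLow (aLow + |M| / LaI + 1 / Laf + 2) I x ∧
          f x (sel x).1 (sel x).2
            - VBar Ky aLow (aLow + |M| / LaI + 1 / Laf + 2) f I x ≤ ε ∧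
          (sel x).1 ≤ aLow + |M| / LaI + 1 / Laf := by
  intro ε hε hε1
  set aUB := aLow + |M| / LaI
  set abar := aUB + 1 / Laf + 2
  have hUB : aLow ≤ aUB := le_add_of_nonneg_right (by positivity)
  have hbase : ∀ x ∈ Kx, ∀ y ∈ Ky, (aUB, y) ∈ GammaBar Ky aLow abar I x := fun x hx y hy =>
    mk_mem_gammaBar_of_lowerBound hM.1 hIslope hLaI (by linarith [one_div_pos.2 hLaf]) hx hy
  have hbdd : ∀ x ∈ Kx,
      BddBelow ((fun p : ℝ × (Fin ny → ℝ) => f x p.1 p.2) '' GammaBar Ky aLow abar I x) :=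
    fun x hx => bddBelow_image_gammaBar hKycomp <| hfcont.comp
      (continuous_const.prodMk continuous_id).continuousOn fun p hp => ⟨hx, hp.1.1, hp.2⟩
  have hnear := fun x hx (η : ℝ) (hη : η > 0) => exists_lt_vBar_add_and_fst_le hKyne (hbdd x hx)
    (hbase x hx) hLaf (fun y hy a ha => hfslope x hx y hy a aUB hUB ha) hη
  have hfK : ContinuousOn (fun q : (Fin nx → ℝ) × ℝ × (Fin ny → ℝ) => f q.1 q.2.1 q.2.2)
      (Kx ×ˢ Icc aLow abar ×ˢ Ky) :=
    hfcont.mono (prod_mono_right (prod_mono_left Icc_subset_Ici_self))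
  obtain ⟨sel, hcont, hsel⟩ := exists_continuousOn_forall_mem_convex_of_eventually_mem
    (fun x hx => convex_epsArgmin hKyconv (hIconc · x hx) (hfconv x hx))
    (fun x₀ hx₀ => exists_eventually_mem_epsArgmin hbdd hnear
      (fun θ hθ => exists_uniform_shift_mem_gammaBar hKx hKycomp (by linarith) hfK hILip
        hIslope hLaI hθ)
      hε hx₀)
  refine ⟨sel, hcont, fun x hx => ⟨(hsel x hx).1, by linarith [(hsel x hx).2], ?_⟩⟩
  have hy := (hsel x hx).1.2.1
  calc (sel x).1 ≤ aUB + ε / Laf := fst_le_of_le_vBar_add (hbdd x hx) (hbase x hx _ hy) hLaf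
        (hfslope x hx _ hy _ _ hUB) hε.le (hsel x hx).2
    _ ≤ aUB + 1 / Laf := by gcongr

/-- in the full CSIP setting there exists, for every `ε ∈ (0,1)`, a continuous
selector `x ↦ (a*(x), y*(x)) ∈ Γ_ā(x)` on `Kx` with `f(x,a*(x),y*(x)) − V_ā(x) ≤ ε` and
`a*(x) ≤ aUB + 1/Laf`. -/
theorem stmt10 {nx ny : ℕ} {S : Type*}
    (Kx : Set (Fin nx → ℝ)) (hKx : IsCompact Kx)
    (Ky : Set (Fin ny → ℝ)) (hKycomp : IsCompact Ky) (hKyconv : Convex ℝ Ky)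
    (hKyne : Ky.Nonempty)
    (aLow : ℝ) (f : (Fin nx → ℝ) → ℝ → (Fin ny → ℝ) → ℝ)
    (I : S → (Fin nx → ℝ) → ℝ → (Fin ny → ℝ) → ℝ)
    (Lf : NNReal)
    (hfLip : ∀ x ∈ Kx, LipschitzOnWith Lf
      (fun p : ℝ × (Fin ny → ℝ) => f x p.1 p.2) (Set.Ici aLow ×ˢ Ky))
    (hfcont : ContinuousOn
      (fun q : (Fin nx → ℝ) × ℝ × (Fin ny → ℝ) => f q.1 q.2.1 q.2.2)
      (Kx ×ˢ Set.Ici aLow ×ˢ Ky))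
    (hfconv : ∀ x ∈ Kx,
      ConvexOn ℝ (Set.Ici aLow ×ˢ Ky) (fun p : ℝ × (Fin ny → ℝ) => f x p.1 p.2))
    (Laf : ℝ) (hLaf : 0 < Laf)
    (hfslope : ∀ x ∈ Kx, ∀ y ∈ Ky, ∀ a1 a2 : ℝ, aLow ≤ a2 → a2 ≤ a1 →
      Laf * (a1 - a2) ≤ f x a1 y - f x a2 y)
    (LI : NNReal)
    (hILip : ∀ s : S, LipschitzOnWith LI
      (fun q : (Fin nx → ℝ) × ℝ × (Fin ny → ℝ) => I s q.1 q.2.1 q.2.2)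
      (Kx ×ˢ Set.Ici aLow ×ˢ Ky))
    (hIconc : ∀ s : S, ∀ x ∈ Kx,
      ConcaveOn ℝ (Set.Ici aLow ×ˢ Ky) (fun p : ℝ × (Fin ny → ℝ) => I s x p.1 p.2))
    (LaI : ℝ) (hLaI : 0 < LaI)
    (hIslope : ∀ s : S, ∀ x ∈ Kx, ∀ y ∈ Ky, ∀ a1 a2 : ℝ, aLow ≤ a2 → a2 ≤ a1 →
      LaI * (a1 - a2) ≤ I s x a1 y - I s x a2 y)
    (M : ℝ)
    (hM : IsGLB {z : ℝ | ∃ s : S, ∃ x ∈ Kx, ∃ y ∈ Ky, z = I s x aLow y} M) :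
    ∀ ε : ℝ, 0 < ε → ε < 1 →
      ∃ sel : (Fin nx → ℝ) → ℝ × (Fin ny → ℝ),
        ContinuousOn sel Kx ∧
        ∀ x ∈ Kx,
          sel x ∈ GammaBar Ky aLow (aLow + |M| / LaI + 1 / Laf + 2) I x ∧
          f x (sel x).1 (sel x).2
            - VBar Ky aLow (aLow + |M| / LaI + 1 / Laf + 2) f I x ≤ ε ∧
          (sel x).1 ≤ aLow + |M| / LaI + 1 / Laf :=
  stmt10_general Kx hKx Ky hKycomp hKyconv hKyne aLow f I hfcont hfconv Laf hLaf hfslope LI hILip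
    hIconc LaI hLaI hIslope M hM
end
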